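/- arXiv:2004.05106 — 2 statements merged into one kernel-verified Lean document; each statement's English description precedes it below -/
import Mathlib

section
/- The MvLoc rules preserve well-formedness: let σ = ⟨M,G,L,S⟩ be a well-formed state and x a local variable. (i) If L(x) = c with c ∈ dom(M), then the state ⟨M with c deleted, G, L with x deleted, M(c)::S⟩ is well-formed. (ii) If L(x) is a reference ⟨c,p,q⟩, then the state ⟨M, G, L with x deleted, L(x)::S⟩ is well-formed. -/
namespace MoveSem

/-- Tags: either the non-resource tag `U` or a resource tag drawn from `RTag`. -/
inductive MTag (RTag : Type) : Type where
  | U : MTag RTag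
  | res : RTag → MTag RTag

/-- Values: primitive values, or record values.  A record value is a non-empty finite
partial function from field names to tagged values, represented as an association
list (non-emptiness and distinctness of field names are imposed in the
well-formedness predicates below). -/
inductive Val (Prim Fld RTag : Type) : Type where
  | prim : Prim → Val Prim Fld RTag
  | record : List (Fld × (Val Prim Fld RTag × MTag RTag)) → Val Prim Fld RTag

/-- Tagged values: a value paired with a tag. -/
abbrev TVal (Prim Fld RTag : Type) : Type := Val Prim Fld RTag × MTag RTag

variable {Loc Prim Var Fld RTag Ty : Type}

/-- Lookup in an association list (the partial-function reading of a record). -/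
def lookupF {α : Type} [DecidableEq Fld] : List (Fld × α) → Fld → Option α
  | [], _ => none
  | (g, a) :: rest, f => if g = f then some a else lookupF rest f

/-- The subterm `tv[p]` of a tagged value located at path `p`. -/
def subTV [DecidableEq Fld] : TVal Prim Fld RTag → List Fld → Option (TVal Prim Fld RTag)
  | tv, [] => some tv
  | (Val.record flds, _), f :: p =>
    match lookupF flds f with
    | some tv' => subTV tv' p
    | none => none
  | (Val.prim _, _), _ :: _ => none

/-- The replacement `tv[p := tv']` of the subterm at path `p` by `tv'`. -/
def setSubTV [DecidableEq Fld] : TVal Prim Fld RTag → List Fld → TVal Prim Fld RTag →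
    Option (TVal Prim Fld RTag)
  | _, [], tv' => some tv'
  | (Val.record flds, t), f :: p, tv' =>
    match lookupF flds f with
    | some tvf =>
      match setSubTV tvf p tv' with
      | some tvf' =>
        some (Val.record (flds.map fun ft => if ft.1 = f then (ft.1, tvf') else ft), t)
      | none => none
    | none => none
  | (Val.prim _, _), _ :: _, _ => none

/-- A tagged value is a *resource* when the type of its value is a resource type. -/
def IsRes (typeOf : Val Prim Fld RTag → Ty) (ResTy : Set Ty) (tv : TVal Prim Fld RTag) : Prop :=
  typeOf tv.1 ∈ ResTy

/-- Well-formed tagged values: the tag is a resource tag iff the type is a resource type,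
and either the value is primitive, or it is a (non-empty, duplicate-free) record value all
of whose field values are well-formed and, in case the type is not a resource type, none of
whose field values is a resource. -/
inductive WFTV (typeOf : Val Prim Fld RTag → Ty) (ResTy : Set Ty) :
    TVal Prim Fld RTag → Prop where
  | prim (p : Prim) (t : MTag RTag)
      (hiff : typeOf (Val.prim p) ∈ ResTy ↔ t ≠ MTag.U) :
      WFTV typeOf ResTy (Val.prim p, t)
  | record (flds : List (Fld × TVal Prim Fld RTag)) (t : MTag RTag)
      (hne : flds ≠ [])
      (hnodup : (flds.map Prod.fst).Nodup)
      (hwf : ∀ f tv, (f, tv) ∈ flds → WFTV typeOf ResTy tv)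
      (hiff : typeOf (Val.record flds) ∈ ResTy ↔ t ≠ MTag.U)
      (hnores : typeOf (Val.record flds) ∉ ResTy →
        ∀ f tv, (f, tv) ∈ flds → ¬ IsRes typeOf ResTy tv) :
      WFTV typeOf ResTy (Val.record flds, t)

/-- References: a location, a path, and a mutability qualifier (`true` = mut). -/
structure MRef (Loc Fld : Type) : Type where
  loc : Loc
  path : List Fld
  mutq : Bool

/-- Stack values: tagged values, references, or (for `Branch`) locations. -/
abbrev SVal (Loc Prim Fld RTag : Type) : Type :=
  TVal Prim Fld RTag ⊕ (MRef Loc Fld ⊕ Loc)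

def SV.tv (tv : TVal Prim Fld RTag) : SVal Loc Prim Fld RTag := Sum.inl tv
def SV.ref (r : MRef Loc Fld) : SVal Loc Prim Fld RTag := Sum.inr (Sum.inl r)
def SV.loc (c : Loc) : SVal Loc Prim Fld RTag := Sum.inr (Sum.inr c)

/-- States: a memory, a global store, a local map, and an operand stack. -/
structure MState (Loc Prim Var Fld RTag Ty : Type) : Type where
  M : Loc → Option (TVal Prim Fld RTag)
  G : Prim × Ty → Option Loc
  L : Var → Option (Loc ⊕ MRef Loc Fld)
  S : List (SVal Loc Prim Fld RTag)

/-- Update (or delete, with `b = none`) a binding of a partial map. -/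
def upd {α β : Type} [DecidableEq α] (f : α → Option β) (a : α) (b : Option β) :
    α → Option β :=
  fun x => if x = a then b else f x

/-- Globally consistent states. -/
structure GloballyConsistent (typeOf : Val Prim Fld RTag → Ty) (ResTy : Set Ty)
    (σ : MState Loc Prim Var Fld RTag Ty) : Prop where
  wf_mem : ∀ c tv, σ.M c = some tv → WFTV typeOf ResTy tv
  wf_stack : ∀ tv, SV.tv tv ∈ σ.S → WFTV typeOf ResTy tv
  dom_eq : ∀ c, (∃ tv, σ.M c = some tv) ↔
    ((∃ g, σ.G g = some c) ∨ (∃ x, σ.L x = some (Sum.inl c)))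
  glob_ty : ∀ a s c, σ.G (a, s) = some c → ∃ v t, σ.M c = some (v, t) ∧ typeOf v = s

/-- Tag-consistent states: each resource tag occurs at most once among subterms of
memory values and stack entries. -/
structure TagConsistent [DecidableEq Fld] (σ : MState Loc Prim Var Fld RTag Ty) : Prop where
  mem_mem : ∀ c₁ c₂ tv₁ tv₂ p₁ p₂ v₁ v₂ t, σ.M c₁ = some tv₁ → σ.M c₂ = some tv₂ →
    subTV tv₁ p₁ = some (v₁, MTag.res t) → subTV tv₂ p₂ = some (v₂, MTag.res t) →
    c₁ = c₂ ∧ p₁ = p₂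
  stack_stack : ∀ (i₁ i₂ : ℕ) tv₁ tv₂ p₁ p₂ v₁ v₂ t,
    σ.S[i₁]? = some (SV.tv tv₁) → σ.S[i₂]? = some (SV.tv tv₂) →
    subTV tv₁ p₁ = some (v₁, MTag.res t) → subTV tv₂ p₂ = some (v₂, MTag.res t) →
    i₁ = i₂ ∧ p₁ = p₂
  mem_stack : ∀ c tv (i : ℕ) tv' p₁ p₂ v₁ v₂ t, σ.M c = some tv → σ.S[i]? = some (SV.tv tv') →
    subTV tv p₁ = some (v₁, MTag.res t) → subTV tv' p₂ = some (v₂, MTag.res t) → False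

/-- Non-aliasing states. -/
structure NonAliasing (σ : MState Loc Prim Var Fld RTag Ty) : Prop where
  locals : ∀ x₁ x₂ c, x₁ ≠ x₂ → σ.L x₁ = some (Sum.inl c) → σ.L x₂ = some (Sum.inl c) → False
  globals : ∀ g₁ g₂ c, g₁ ≠ g₂ → σ.G g₁ = some c → σ.G g₂ = some c → False
  glob_loc : ∀ g x c, σ.G g = some c → σ.L x = some (Sum.inl c) → False

/-- Well-formed states. -/
structure WFState [DecidableEq Fld] (typeOf : Val Prim Fld RTag → Ty) (ResTy : Set Ty)
    (σ : MState Loc Prim Var Fld RTag Ty) : Prop where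
  gc : GloballyConsistent typeOf ResTy σ
  tc : TagConsistent σ
  na : NonAliasing σ

/-- The resource tags of a state: tags occurring on some subterm of a value in the
image of the memory or of a tagged value on the stack. -/
def resources [DecidableEq Fld] (σ : MState Loc Prim Var Fld RTag Ty) : Set RTag :=
  { t | (∃ c tv p v, σ.M c = some tv ∧ subTV tv p = some (v, MTag.res t)) ∨
        (∃ tv, SV.tv tv ∈ σ.S ∧ ∃ p v, subTV tv p = some (v, MTag.res t)) }

lemma upd_none_eq_some {α β : Type} [DecidableEq α] {f : α → Option β} {a x : α} {b : β} :
    upd f a none x = some b ↔ x ≠ a ∧ f x = some b := by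
  unfold upd; split <;> simp_all

lemma SV.tv_inj {tv tv' : TVal Prim Fld RTag} (h : (SV.tv tv : SVal Loc Prim Fld RTag) = SV.tv tv') :
    tv = tv' := by
  simpa [SV.tv] using h

/-- The `MvLoc` rules preserve well-formedness. -/
theorem mvloc_preserves_wf {Loc Prim Var Fld RTag Ty : Type}
    [DecidableEq Loc] [DecidableEq Prim] [DecidableEq Var] [DecidableEq Fld] [DecidableEq Ty]
    [Countable Loc] [Countable Prim] [Countable Var] [Countable RTag] [Finite Fld]
    (typeOf : Val Prim Fld RTag → Ty) (ResTy : Set Ty)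
    (M : Loc → Option (TVal Prim Fld RTag)) (G : Prim × Ty → Option Loc)
    (L : Var → Option (Loc ⊕ MRef Loc Fld)) (S : List (SVal Loc Prim Fld RTag))
    (x : Var) (hwf : WFState typeOf ResTy (MState.mk M G L S)) :
    -- (i) moving a value out of local `x`
    (∀ c tv, L x = some (Sum.inl c) → M c = some tv →
      WFState typeOf ResTy (MState.mk (upd M c none) G (upd L x none) (SV.tv tv :: S))) ∧
    -- (ii) moving a reference out of local `x`
    (∀ r : MRef Loc Fld, L x = some (Sum.inr r) →
      WFState typeOf ResTy (MState.mk M G (upd L x none) (SV.ref r :: S))) := by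
  obtain ⟨gc, tc, na⟩ := hwf
  constructor
  · -- part (i)
    intro c tv hLx hMc
    refine ⟨⟨?_, ?_, ?_, ?_⟩, ⟨?_, ?_, ?_⟩, ⟨?_, ?_, ?_⟩⟩
    · -- wf_mem
      intro c' tv' h
      replace h : upd M c none c' = some tv' := h
      rw [upd_none_eq_some] at h
      exact gc.wf_mem c' tv' h.2
    · -- wf_stack
      intro tv' h
      replace h : SV.tv tv' ∈ SV.tv tv :: S := h
      rcases List.mem_cons.mp h with h | h
      · exact (SV.tv_inj h.symm) ▸ gc.wf_mem c tv hMc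
      · exact gc.wf_stack tv' h
    · -- dom_eq
      intro c'
      constructor
      · rintro ⟨tv', h⟩
        replace h : upd M c none c' = some tv' := h
        rw [upd_none_eq_some] at h
        rcases (gc.dom_eq c').mp ⟨tv', h.2⟩ with hg | ⟨y, hy⟩
        · exact Or.inl hg
        · refine Or.inr ⟨y, ?_⟩
          have hyx : y ≠ x := by
            intro he
            exact h.1 (Sum.inl.inj (Option.some.inj (hLx.symm.trans (he ▸ hy)))).symm
          show upd L x none y = _
          simpa [upd, hyx] using hy
      · rintro (⟨g, hg⟩ | ⟨y, hy⟩)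
        · replace hg : G g = some c' := hg
          have hc : c' ≠ c := fun h => na.glob_loc g x c' hg (h.symm ▸ hLx)
          obtain ⟨tv', htv'⟩ := (gc.dom_eq c').mpr (Or.inl ⟨g, hg⟩)
          exact ⟨tv', upd_none_eq_some.mpr ⟨hc, htv'⟩⟩
        · have hyx : y ≠ x := by intro he; subst he; simpa [upd] using hy
          replace hy : L y = some (Sum.inl c') := by simpa [upd, hyx] using hy
          have hc : c' ≠ c := fun h => na.locals y x c' hyx hy (h.symm ▸ hLx)
          obtain ⟨tv', htv'⟩ := (gc.dom_eq c').mpr (Or.inr ⟨y, hy⟩)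
          exact ⟨tv', upd_none_eq_some.mpr ⟨hc, htv'⟩⟩
    · -- glob_ty
      intro a s c' hg
      replace hg : G (a, s) = some c' := hg
      obtain ⟨v, t, hM, hty⟩ := gc.glob_ty a s c' hg
      have hc : c' ≠ c := fun h => na.glob_loc (a, s) x c' hg (h.symm ▸ hLx)
      exact ⟨v, t, upd_none_eq_some.mpr ⟨hc, hM⟩, hty⟩
    · -- mem_mem
      intro c₁ c₂ tv₁ tv₂ p₁ p₂ v₁ v₂ t h₁ h₂ hs₁ hs₂
      replace h₁ : upd M c none c₁ = some tv₁ := h₁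
      replace h₂ : upd M c none c₂ = some tv₂ := h₂
      rw [upd_none_eq_some] at h₁ h₂
      exact tc.mem_mem c₁ c₂ tv₁ tv₂ p₁ p₂ v₁ v₂ t h₁.2 h₂.2 hs₁ hs₂
    · -- stack_stack
      intro i₁ i₂ tv₁ tv₂ p₁ p₂ v₁ v₂ t h₁ h₂ hs₁ hs₂
      replace h₁ : (SV.tv tv :: S)[i₁]? = some (SV.tv tv₁) := h₁
      replace h₂ : (SV.tv tv :: S)[i₂]? = some (SV.tv tv₂) := h₂
      rcases i₁ with _ | i₁ <;> rcases i₂ with _ | i₂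
      · simp only [List.getElem?_cons_zero, Option.some.injEq] at h₁ h₂
        rw [SV.tv_inj h₁.symm] at hs₁
        rw [SV.tv_inj h₂.symm] at hs₂
        exact ⟨rfl, (tc.mem_mem c c tv tv p₁ p₂ v₁ v₂ t hMc hMc hs₁ hs₂).2⟩
      · simp only [List.getElem?_cons_zero, Option.some.injEq,
          List.getElem?_cons_succ] at h₁ h₂
        rw [SV.tv_inj h₁.symm] at hs₁
        exact absurd (tc.mem_stack c tv i₂ tv₂ p₁ p₂ v₁ v₂ t hMc h₂ hs₁ hs₂) (by simp)
      · simp only [List.getElem?_cons_zero, Option.some.injEq,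
          List.getElem?_cons_succ] at h₁ h₂
        rw [SV.tv_inj h₂.symm] at hs₂
        exact absurd (tc.mem_stack c tv i₁ tv₁ p₂ p₁ v₂ v₁ t hMc h₁ hs₂ hs₁) (by simp)
      · simp only [List.getElem?_cons_succ] at h₁ h₂
        obtain ⟨hij, hp⟩ := tc.stack_stack i₁ i₂ tv₁ tv₂ p₁ p₂ v₁ v₂ t h₁ h₂ hs₁ hs₂
        exact ⟨by omega, hp⟩
    · -- mem_stack
      intro c' tv' i tv'' p₁ p₂ v₁ v₂ t hM hSt hs₁ hs₂
      replace hM : upd M c none c' = some tv' := hM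
      replace hSt : (SV.tv tv :: S)[i]? = some (SV.tv tv'') := hSt
      rw [upd_none_eq_some] at hM
      rcases i with _ | i
      · simp only [List.getElem?_cons_zero, Option.some.injEq] at hSt
        rw [SV.tv_inj hSt.symm] at hs₂
        exact hM.1 (tc.mem_mem c' c tv' tv p₁ p₂ v₁ v₂ t hM.2 hMc hs₁ hs₂).1
      · simp only [List.getElem?_cons_succ] at hSt
        exact tc.mem_stack c' tv' i tv'' p₁ p₂ v₁ v₂ t hM.2 hSt hs₁ hs₂
    · -- locals
      intro x₁ x₂ c' hne h₁ h₂
      have h₁x : x₁ ≠ x := by intro he; subst he; simpa [upd] using h₁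
      have h₂x : x₂ ≠ x := by intro he; subst he; simpa [upd] using h₂
      replace h₁ : L x₁ = some (Sum.inl c') := by simpa [upd, h₁x] using h₁
      replace h₂ : L x₂ = some (Sum.inl c') := by simpa [upd, h₂x] using h₂
      exact na.locals x₁ x₂ c' hne h₁ h₂
    · -- globals
      exact na.globals
    · -- glob_loc
      intro g y c' hg hy
      have hyx : y ≠ x := by intro he; subst he; simpa [upd] using hy
      replace hy : L y = some (Sum.inl c') := by simpa [upd, hyx] using hy
      exact na.glob_loc g y c' hg hy
  · -- part (ii)
    intro r hLx
    have hmem : ∀ tv' : TVal Prim Fld RTag,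
        (SV.tv tv' : SVal Loc Prim Fld RTag) ∈ SV.ref r :: S → SV.tv tv' ∈ S := by
      intro tv' h
      rcases List.mem_cons.mp h with h | h
      · exact absurd h (by simp [SV.tv, SV.ref])
      · exact h
    have hidx : ∀ (i : ℕ) (tv' : TVal Prim Fld RTag),
        (SV.ref r :: S)[i]? = some (SV.tv tv') → ∃ j, i = j + 1 ∧ S[j]? = some (SV.tv tv') := by
      intro i tv' h
      rcases i with _ | j
      · simp [SV.tv, SV.ref] at h
      · exact ⟨j, rfl, by simpa using h⟩
    refine ⟨⟨gc.wf_mem, ?_, ?_, gc.glob_ty⟩, ⟨tc.mem_mem, ?_, ?_⟩, ⟨?_, na.globals, ?_⟩⟩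
    · intro tv' h
      exact gc.wf_stack tv' (hmem tv' h)
    · intro c'
      rw [show (MState.mk M G (upd L x none) (SV.ref r :: S)).M = M from rfl]
      rw [gc.dom_eq c']
      constructor
      · rintro (hg | ⟨y, hy⟩)
        · exact Or.inl hg
        · refine Or.inr ⟨y, ?_⟩
          have hyx : y ≠ x := by
            intro he; subst he; exact absurd (hLx.symm.trans hy) (by simp)
          show upd L x none y = _
          simpa [upd, hyx] using hy
      · rintro (hg | ⟨y, hy⟩)
        · exact Or.inl hg
        · have hyx : y ≠ x := by intro he; subst he; simpa [upd] using hy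
          replace hy : L y = some (Sum.inl c') := by simpa [upd, hyx] using hy
          exact Or.inr ⟨y, hy⟩
    · intro i₁ i₂ tv₁ tv₂ p₁ p₂ v₁ v₂ t h₁ h₂ hs₁ hs₂
      obtain ⟨j₁, rfl, h₁'⟩ := hidx i₁ tv₁ h₁
      obtain ⟨j₂, rfl, h₂'⟩ := hidx i₂ tv₂ h₂
      obtain ⟨hij, hp⟩ := tc.stack_stack j₁ j₂ tv₁ tv₂ p₁ p₂ v₁ v₂ t h₁' h₂' hs₁ hs₂
      exact ⟨by omega, hp⟩
    · intro c' tv' i tv'' p₁ p₂ v₁ v₂ t hM hSt hs₁ hs₂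
      obtain ⟨j, rfl, hSt'⟩ := hidx i tv'' hSt
      exact tc.mem_stack c' tv' j tv'' p₁ p₂ v₁ v₂ t hM hSt' hs₁ hs₂
    · intro x₁ x₂ c' hne h₁ h₂
      have h₁x : x₁ ≠ x := by intro he; subst he; simpa [upd] using h₁
      have h₂x : x₂ ≠ x := by intro he; subst he; simpa [upd] using h₂
      replace h₁ : L x₁ = some (Sum.inl c') := by simpa [upd, h₁x] using h₁
      replace h₂ : L x₂ = some (Sum.inl c') := by simpa [upd, h₂x] using h₂
      exact na.locals x₁ x₂ c' hne h₁ h₂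
    · intro g y c' hg hy
      have hyx : y ≠ x := by intro he; subst he; simpa [upd] using hy
      replace hy : L y = some (Sum.inl c') := by simpa [upd, hyx] using hy
      exact na.glob_loc g y c' hg hy

end MoveSem
end

section
/- The CpLoc rules preserve well-formedness: let σ = ⟨M,G,L,S⟩ be a well-formed state and x a local variable. (i) If L(x) = c with c ∈ dom(M) and M(c) = ⟨v,U⟩ (a non-resource tagged value), then the state ⟨M, G, L, M(c)::S⟩ is well-formed. (ii) If L(x) is a reference r = ⟨c,p,q⟩, then the state ⟨M, G, L, r::S⟩ is well-formed. -/
namespace MoveSem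

variable {Loc Prim Var Fld RTag Ty : Type}

theorem lookupF_mem {α : Type} [DecidableEq Fld] {l : List (Fld × α)} {f : Fld} {a : α}
    (h : lookupF l f = some a) : (f, a) ∈ l := by
  induction l with
  | nil => simp [lookupF] at h
  | cons hd tl ih =>
    obtain ⟨g, b⟩ := hd
    simp only [lookupF] at h
    by_cases hg : g = f
    · subst hg; simp at h; subst h; exact List.mem_cons_self
    · rw [if_neg hg] at h; exact List.mem_cons_of_mem _ (ih h)

theorem wftv_iff {typeOf : Val Prim Fld RTag → Ty} {ResTy : Set Ty}
    {tv : TVal Prim Fld RTag} (h : WFTV typeOf ResTy tv) :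
    typeOf tv.1 ∈ ResTy ↔ tv.2 ≠ MTag.U := by
  cases h with
  | prim p t hiff => exact hiff
  | record flds t _ _ _ hiff _ => exact hiff

/-- A well-formed tagged value with tag `U` has no resource-tagged subterm. -/
theorem no_res_sub [DecidableEq Fld] {typeOf : Val Prim Fld RTag → Ty} {ResTy : Set Ty}
    {tv : TVal Prim Fld RTag} (h : WFTV typeOf ResTy tv) :
    tv.2 = MTag.U → ∀ p v t, subTV tv p = some (v, MTag.res t) → False := by
  induction h with
  | prim q t hiff =>
    rintro rfl p v t hs
    cases p with
    | nil => simp [subTV] at hs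
    | cons f p' => simp [subTV] at hs
  | record flds t hne hnodup hwf hiff hnores ih =>
    rintro rfl p v t hs
    cases p with
    | nil => simp [subTV] at hs
    | cons f p' =>
      simp only [subTV] at hs
      cases hl : lookupF flds f with
      | none => rw [hl] at hs; simp at hs
      | some tvf =>
        rw [hl] at hs
        have hmem := lookupF_mem hl
        have hwff := hwf f tvf hmem
        have hnotres : typeOf (Val.record flds) ∉ ResTy := fun hc => (hiff.mp hc) rfl
        have hnr : ¬ IsRes typeOf ResTy tvf := hnores hnotres f tvf hmem
        have htag : tvf.2 = MTag.U := by
          by_contra hne'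
          exact hnr ((wftv_iff hwff).mpr hne')
        exact ih f tvf hmem htag p' v t hs

/-- Pushing a stack value with no resource-tagged subterm preserves tag consistency. -/
theorem push_tc [DecidableEq Fld] {M : Loc → Option (TVal Prim Fld RTag)}
    {G : Prim × Ty → Option Loc} {L : Var → Option (Loc ⊕ MRef Loc Fld)}
    {S : List (SVal Loc Prim Fld RTag)} {sv : SVal Loc Prim Fld RTag}
    (htc : TagConsistent (MState.mk M G L S))
    (hsv : ∀ tv p v t, sv = SV.tv tv → subTV tv p = some (v, MTag.res t) → False) :
    TagConsistent (MState.mk M G L (sv :: S)) := by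
  constructor
  · exact htc.mem_mem
  · intro i₁ i₂ tv₁ tv₂ p₁ p₂ v₁ v₂ t h1 h2 hs1 hs2
    match i₁, i₂ with
    | 0, _ =>
      simp only [List.getElem?_cons_zero, Option.some_inj] at h1
      exact absurd hs1 (fun hs => hsv tv₁ p₁ v₁ t h1 hs)
    | _, 0 =>
      simp only [List.getElem?_cons_zero, Option.some_inj] at h2
      exact absurd hs2 (fun hs => hsv tv₂ p₂ v₂ t h2 hs)
    | n₁ + 1, n₂ + 1 =>
      simp only [List.getElem?_cons_succ] at h1 h2
      obtain ⟨he, hp⟩ := htc.stack_stack n₁ n₂ tv₁ tv₂ p₁ p₂ v₁ v₂ t h1 h2 hs1 hs2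
      exact ⟨by omega, hp⟩
  · intro c tv i tv' p₁ p₂ v₁ v₂ t hm hi hs1 hs2
    match i with
    | 0 =>
      simp only [List.getElem?_cons_zero, Option.some_inj] at hi
      exact hsv tv' p₂ v₂ t hi hs2
    | n + 1 =>
      simp only [List.getElem?_cons_succ] at hi
      exact htc.mem_stack c tv n tv' p₁ p₂ v₁ v₂ t hm hi hs1 hs2

/-- The `CpLoc` rules preserve well-formedness. -/
theorem cploc_preserves_wf {Loc Prim Var Fld RTag Ty : Type}
    [DecidableEq Loc] [DecidableEq Prim] [DecidableEq Var] [DecidableEq Fld] [DecidableEq Ty]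
    [Countable Loc] [Countable Prim] [Countable Var] [Countable RTag] [Finite Fld]
    (typeOf : Val Prim Fld RTag → Ty) (ResTy : Set Ty)
    (M : Loc → Option (TVal Prim Fld RTag)) (G : Prim × Ty → Option Loc)
    (L : Var → Option (Loc ⊕ MRef Loc Fld)) (S : List (SVal Loc Prim Fld RTag))
    (x : Var) (hwf : WFState typeOf ResTy (MState.mk M G L S)) :
    -- (i) copying a non-resource value stored at local `x`
    (∀ c v, L x = some (Sum.inl c) → M c = some (v, MTag.U) →
      WFState typeOf ResTy (MState.mk M G L (SV.tv (v, MTag.U) :: S))) ∧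
    -- (ii) copying a reference stored at local `x`
    (∀ r : MRef Loc Fld, L x = some (Sum.inr r) →
      WFState typeOf ResTy (MState.mk M G L (SV.ref r :: S))) := by
  obtain ⟨gc, tc, na⟩ := hwf
  constructor
  · -- case (i)
    intro c v hL hM
    have hwfv : WFTV typeOf ResTy (v, MTag.U) := gc.wf_mem c (v, MTag.U) hM
    refine ⟨⟨gc.wf_mem, ?_, gc.dom_eq, gc.glob_ty⟩, ?_, ⟨na.locals, na.globals, na.glob_loc⟩⟩
    · intro tv htv
      rcases List.mem_cons.mp htv with h | h
      · have : tv = (v, MTag.U) := by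
          simpa [SV.tv] using h
        rw [this]; exact hwfv
      · exact gc.wf_stack tv h
    · refine push_tc tc ?_
      intro tv p v' t heq hs
      have : tv = (v, MTag.U) := by simpa [SV.tv] using heq.symm
      subst this
      exact no_res_sub hwfv rfl p v' t hs
  · -- case (ii)
    intro r hL
    refine ⟨⟨gc.wf_mem, ?_, gc.dom_eq, gc.glob_ty⟩, ?_, ⟨na.locals, na.globals, na.glob_loc⟩⟩
    · intro tv htv
      rcases List.mem_cons.mp htv with h | h
      · simp [SV.tv, SV.ref] at h
      · exact gc.wf_stack tv h
    · refine push_tc tc ?_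
      intro tv p v' t heq hs
      simp [SV.tv, SV.ref] at heq

end MoveSem
end
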